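/- arXiv:1212.5272 — 4 statements merged into one kernel-verified Lean document; each statement's English description precedes it below -/
import Mathlib

section
/- For every s ∈ S, in the two-variable formal power series ring ℂ⟦X,Y⟧, substituting X ↦ X² − Y⁴ and Y ↦ Y⁴ into φ_{σ(s)} yields the factorization φ_{σ(s)}(X² − Y⁴, Y⁴) = (X + Σ_{n≥0} a_n^s Y^{2+4n})·(X − Σ_{n≥0} a_n^s Y^{2+4n}); in particular φ_s divides φ_{σ(s)}(X² − Y⁴, Y⁴) in ℂ⟦X,Y⟧. -/
noncomputable section

/-- The space of binary sequences `{0,1}^ℕ`. -/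
abbrev BinSeq := ℕ → Fin 2

/-- The left-shift map `σ`. -/
def shift (s : BinSeq) : BinSeq := fun n => s (n + 1)

/-- `a : S → ℕ → ℂ` satisfies the recursion defining the coefficients `aₙˢ`. -/
def IsCoeffFamily (a : BinSeq → ℕ → ℂ) : Prop :=
  (∀ s : BinSeq, a s 0 = (-1 : ℂ) ^ (s 0 : ℕ)) ∧
  (∀ (s : BinSeq) (n : ℕ), a s (n + 1) =
    if 4 ∣ n then
      -(a (shift s) (n / 4)) / (2 * a s 0)
        - (∑ i ∈ Finset.Ico 1 (n + 1), a s i * a s (n + 1 - i)) / (2 * a s 0)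
    else
      -(∑ i ∈ Finset.Ico 1 (n + 1), a s i * a s (n + 1 - i)) / (2 * a s 0))

/-- The series `Σ_{n≥0} aₙˢ Y^(2+4n)` viewed inside `ℂ⟦X,Y⟧`
(variable `0` is `X`, variable `1` is `Y`). -/
def tailSer (a : BinSeq → ℕ → ℂ) (s : BinSeq) : MvPowerSeries (Fin 2) ℂ :=
  fun d => if d 0 = 0 ∧ d 1 % 4 = 2 then a s ((d 1 - 2) / 4) else 0

/-- The two-variable series `φ_s = X + Σ_{n≥0} aₙˢ Y^(2+4n) ∈ ℂ⟦X,Y⟧`. -/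
def phi (a : BinSeq → ℕ → ℂ) (s : BinSeq) : MvPowerSeries (Fin 2) ℂ :=
  MvPowerSeries.X 0 + tailSer a s

/-- The substitution `X ↦ X² − Y⁴`, `Y ↦ Y⁴` on `ℂ⟦X,Y⟧`, i.e. the unique continuous
`ℂ`-algebra endomorphism of `ℂ⟦X,Y⟧` sending `X` to `X² − Y⁴` and `Y` to `Y⁴`,
defined coefficientwise: `φ = Σ_{(i,j)} c_{ij} X^i Y^j` is sent to
`Σ_{(i,j)} c_{ij} (X² − Y⁴)^i (Y⁴)^j`.  This sum is locally finite: the coefficient of a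
monomial `e` in `(X² − Y⁴)^i (Y⁴)^j` vanishes whenever `2i + 4j` exceeds the total degree
of `e`, so only the finitely many pairs `(i,j)` with `i, j ≤ e 0 + e 1` can contribute. -/
def substF (φ : MvPowerSeries (Fin 2) ℂ) : MvPowerSeries (Fin 2) ℂ :=
  fun e =>
    ∑ p ∈ Finset.range (e 0 + e 1 + 1) ×ˢ Finset.range (e 0 + e 1 + 1),
      MvPowerSeries.coeff (Finsupp.single 0 p.1 + Finsupp.single 1 p.2) φ *
        MvPowerSeries.coeff e
          (((MvPowerSeries.X 0 : MvPowerSeries (Fin 2) ℂ) ^ 2 - MvPowerSeries.X 1 ^ 4) ^ p.1 *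
            MvPowerSeries.X 1 ^ (4 * p.2))

/-!
With `f_s = Σ aₙˢ Yⁿ ∈ ℂ⟦Y⟧`, the recursion for `aₙˢ` is the coefficientwise form of
`f_s² = 1 − Y·f_{σs}(Y⁴)` (using `(a₀ˢ)² = 1`). Hence the tail
`T_s = Σ aₙˢ Y^(2+4n) = Y²·f_s(Y⁴)` satisfies `T_s² = Y⁴ − T_{σs}(Y⁴)`. The substitution
`X ↦ X² − Y⁴`, `Y ↦ Y⁴` is additive, sends `X` to `X² − Y⁴` and a series `g(Y)` in `Y` alone
to `g(Y⁴)`, so `φ_{σs}(X² − Y⁴, Y⁴) = X² − Y⁴ + T_{σs}(Y⁴) = X² − T_s²`.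
-/

open PowerSeries

theorem finsupp_fin_two_eq_single_one_iff {M : Type*} [Zero M] (e : Fin 2 →₀ M) (m : M) :
    e = Finsupp.single 1 m ↔ e 0 = 0 ∧ e 1 = m := by
  simp [Finsupp.ext_iff, Fin.forall_fin_two]

section embedY

variable {R : Type*} [CommRing R]

def embedY : R⟦X⟧ →ₐ[R] MvPowerSeries (Fin 2) R :=
  substAlgHom (HasSubst.X (1 : Fin 2))

theorem embedY_X : embedY (X : R⟦X⟧) = MvPowerSeries.X 1 :=
  substAlgHom_X _

theorem coeff_embedY (f : R⟦X⟧) (e : Fin 2 →₀ ℕ) :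
    MvPowerSeries.coeff e (embedY f) = if e 0 = 0 then coeff (e 1) f else 0 := by
  rw [embedY, coe_substAlgHom, coeff_subst_single,
    if_congr ((finsupp_fin_two_eq_single_one_iff e _).trans (and_iff_left rfl)) rfl rfl]

end embedY

theorem substF_add (f g : MvPowerSeries (Fin 2) ℂ) :
    substF (f + g) = substF f + substF g := by
  ext e
  simp only [MvPowerSeries.coeff_apply, substF, map_add, add_mul, Finset.sum_add_distrib]

theorem substF_X_zero :
    substF (MvPowerSeries.X 0) = MvPowerSeries.X 0 ^ 2 - MvPowerSeries.X 1 ^ 4 := by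
  ext e
  have hX (i j : ℕ) : MvPowerSeries.coeff (Finsupp.single 0 i + Finsupp.single 1 j)
      (MvPowerSeries.X 0 : MvPowerSeries (Fin 2) ℂ) = if i = 1 ∧ j = 0 then 1 else 0 := by
    simp [MvPowerSeries.coeff_X, Finsupp.ext_iff, Fin.forall_fin_two]
  rw [MvPowerSeries.coeff_apply, substF, Finset.sum_eq_single (1, 0)]
  · simp
  · rintro ⟨i, j⟩ - hne
    rw [hX, if_neg (by simpa [Prod.ext_iff] using hne), zero_mul]
  · intro hmem
    have he : e 0 = 0 ∧ e 1 = 0 := by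
      simp only [Finset.mem_product, Finset.mem_range] at hmem
      omega
    obtain rfl : e = 0 := by simpa [Finsupp.ext_iff, Fin.forall_fin_two] using he
    simp

theorem substF_embedY (f : ℂ⟦X⟧) :
    substF (embedY f) = embedY (expand 4 four_ne_zero f) := by
  ext e
  have hcoeff (i j : ℕ) : MvPowerSeries.coeff (Finsupp.single 0 i + Finsupp.single 1 j)
      (embedY f) = if i = 0 then coeff j f else 0 := by
    simp [coeff_embedY]
  have hY (j : ℕ) :
      MvPowerSeries.coeff e (MvPowerSeries.X 1 ^ (4 * j) : MvPowerSeries (Fin 2) ℂ) =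
        if e 0 = 0 ∧ e 1 = 4 * j then 1 else 0 := by
    rw [MvPowerSeries.coeff_X_pow, if_congr (finsupp_fin_two_eq_single_one_iff e _) rfl rfl]
  rw [MvPowerSeries.coeff_apply, substF, coeff_embedY, coeff_expand,
    Finset.sum_eq_single (0, e 1 / 4)]
  · simp only [hcoeff, hY, pow_zero, one_mul, if_true]
    split_ifs <;> first | omega | simp
  · rintro ⟨i, j⟩ - hne
    simp only [hcoeff]
    split_ifs with hi
    · rw [hi, pow_zero, one_mul, hY, if_neg, mul_zero]
      rintro ⟨h0, h1⟩
      exact hne (Prod.ext hi (by omega))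
    · exact zero_mul _
  · intro hmem
    exact absurd (Finset.mem_product.2
      ⟨Finset.mem_range.2 (by omega), Finset.mem_range.2 (by omega)⟩) hmem

def tailPS (a : BinSeq → ℕ → ℂ) (s : BinSeq) : ℂ⟦X⟧ :=
  X ^ 2 * expand 4 four_ne_zero (mk (a s))

theorem embedY_tailPS (a : BinSeq → ℕ → ℂ) (s : BinSeq) :
    embedY (tailPS a s) = tailSer a s := by
  ext e
  rw [coeff_embedY, tailPS, coeff_X_pow_mul', coeff_expand, coeff_mk,
    MvPowerSeries.coeff_apply, tailSer]
  split_ifs <;> first | rfl | omega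

namespace IsCoeffFamily

variable {a : BinSeq → ℕ → ℂ}

theorem mk_sq (ha : IsCoeffFamily a) (s : BinSeq) :
    mk (a s) ^ 2 = 1 - X * expand 4 four_ne_zero (mk (a (shift s))) := by
  have ha0 : a s 0 * a s 0 = 1 := by
    rw [ha.1 s, ← mul_pow, neg_mul_neg, one_mul, one_pow]
  ext (_ | m)
  · simp [sq, ha0]
  rw [sq, coeff_mul, Finset.Nat.sum_antidiagonal_eq_sum_range_succ_mk, Finset.sum_range_succ,
    Finset.range_eq_Ico, Finset.sum_eq_sum_Ico_succ_bot (Nat.succ_pos m)]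
  simp only [coeff_mk, Nat.sub_zero, Nat.sub_self, map_sub, coeff_one, coeff_succ_X_mul,
    coeff_expand]
  rw [ha.2 s m, zero_add, Nat.succ_eq_add_one, if_neg m.succ_ne_zero]
  have ha0_ne : a s 0 ≠ 0 := left_ne_zero_of_mul_eq_one ha0
  split_ifs <;> field_simp <;> ring

theorem tailPS_sq (ha : IsCoeffFamily a) (s : BinSeq) :
    tailPS a s ^ 2 = X ^ 4 - expand 4 four_ne_zero (tailPS a (shift s)) := by
  rw [tailPS, tailPS, mul_pow, ← map_pow, ha.mk_sq, map_sub, map_one, map_mul, map_mul, map_pow,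
    expand_X]
  ring

end IsCoeffFamily

/-- Substituting `X ↦ X² − Y⁴`, `Y ↦ Y⁴` into `φ_{σ(s)}` yields the factorization
`φ_{σ(s)}(X² − Y⁴, Y⁴) = (X + Σ aₙˢ Y^(2+4n))·(X − Σ aₙˢ Y^(2+4n))`;
in particular `φ_s` divides `φ_{σ(s)}(X² − Y⁴, Y⁴)` in `ℂ⟦X,Y⟧`. -/
theorem stmt2 (a : BinSeq → ℕ → ℂ) (ha : IsCoeffFamily a) (s : BinSeq) :
    substF (phi a (shift s)) =
      (MvPowerSeries.X 0 + tailSer a s) * (MvPowerSeries.X 0 - tailSer a s) ∧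
    phi a s ∣ substF (phi a (shift s)) := by
  have hsq : tailSer a s ^ 2 =
      MvPowerSeries.X 1 ^ 4 - embedY (expand 4 four_ne_zero (tailPS a (shift s))) := by
    rw [← embedY_tailPS, ← map_pow, ha.tailPS_sq, map_sub, map_pow, embedY_X]
  have hfac : substF (phi a (shift s)) =
      (MvPowerSeries.X 0 + tailSer a s) * (MvPowerSeries.X 0 - tailSer a s) := by
    rw [phi, ← embedY_tailPS a (shift s), substF_add, substF_X_zero, substF_embedY]
    linear_combination hsq
  exact ⟨hfac, Dvd.intro _ hfac.symm⟩
end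
end

section
/- For every binary sequence s ∈ S and every real number r with 0 ≤ r < 1/10, the family n ↦ |a_n^s|·r^{2+4n} is summable; consequently the power series φ_s(x,y) = x + Σ_{n≥0} a_n^s y^{2+4n} converges (defines a holomorphic function) on the set {(x,y) ∈ ℂ² : |y| < 1/10}. -/
/-!
The norms `bₙ = ‖aₙˢ‖` satisfy `b₀ = 1` and `2 bₙ₊₁ ≤ b'_{⌊n/4⌋} + ∑_{i+j=n+1, i,j≥1} bᵢ bⱼ`,
where `b'` is the sequence of `σ(s)`. By strong induction on `n`, simultaneously for all `s`,
`bₙ ≤ 8ⁿ / (8n²)` for `n ≥ 1`: the weight `1/n²` makes the self-convolution of this majorant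
no larger than the majorant itself, since `1/(i²j²) ≤ 2(1/i² + 1/j²)/(i+j)²` and `∑ 1/i² ≤ 2`.
Hence `‖aₙˢ‖ ≤ 8ⁿ`, so the series is dominated by the geometric series `∑ 8ⁿ r^(2+4n)`,
which converges for `r ≤ 1/10`; holomorphy follows from the locally uniform convergence.
-/

noncomputable section

open Finset

lemma inv_mul_sq_le {x y : ℝ} (hx : 0 < x) (hy : 0 < y) :
    ((x * y) ^ 2)⁻¹ ≤ 2 / (x + y) ^ 2 * ((x ^ 2)⁻¹ + (y ^ 2)⁻¹) := by
  have h_eq : 2 / (x + y) ^ 2 * ((x ^ 2)⁻¹ + (y ^ 2)⁻¹)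
      = 2 * (x ^ 2 + y ^ 2) / ((x + y) ^ 2 * (x * y) ^ 2) := by
    field_simp; ring
  rw [h_eq, le_div_iff₀ (by positivity), inv_mul_eq_div, div_le_iff₀ (by positivity)]
  nlinarith [sq_nonneg (x - y)]

lemma sum_Ico_one_inv_sq_le (n : ℕ) : ∑ i ∈ Ico 1 (n + 1), ((i : ℝ) ^ 2)⁻¹ ≤ 2 := by
  calc ∑ i ∈ Ico 1 (n + 1), ((i : ℝ) ^ 2)⁻¹ = ∑ i ∈ Ioo 0 (n + 1), ((i : ℝ) ^ 2)⁻¹ := by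
        rw [← Ico_add_one_left_eq_Ioo, zero_add]
    _ ≤ 2 / ((0 : ℕ) + 1) := sum_Ioo_inv_sq_le 0 (n + 1)
    _ = 2 := by norm_num

lemma sum_Ico_one_inv_sq_reflect_le (n : ℕ) :
    ∑ i ∈ Ico 1 (n + 1), (((n + 1 - i : ℕ) : ℝ) ^ 2)⁻¹ ≤ 2 := by
  rw [sum_Ico_reflect (fun j : ℕ => ((j : ℝ) ^ 2)⁻¹) 1 (m := n + 1) (n := n + 1) (by omega)]
  simpa using sum_Ico_one_inv_sq_le n

def majorant (n : ℕ) : ℝ := 8 ^ n / (8 * n ^ 2)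

lemma majorant_nonneg (n : ℕ) : 0 ≤ majorant n := by unfold majorant; positivity

lemma majorant_le_pow (n : ℕ) : majorant n ≤ 8 ^ n := by
  rcases Nat.eq_zero_or_pos n with rfl | hn
  · norm_num [majorant]
  · exact div_le_self (by positivity) (by nlinarith [(Nat.one_le_cast (α := ℝ)).2 hn])

lemma majorant_monotoneOn : MonotoneOn majorant (Set.Ici 1) := by
  refine monotoneOn_nat_Ici_of_le_succ fun m hm => ?_
  have hm' : (1 : ℝ) ≤ m := by exact_mod_cast hm
  unfold majorant
  rw [div_le_div_iff₀ (by positivity) (by positivity), pow_succ (8 : ℝ) m]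
  push_cast
  have : (0 : ℝ) ≤ 8 ^ m := by positivity
  nlinarith [mul_le_mul_of_nonneg_left (show ((m : ℝ) + 1) ^ 2 ≤ 4 * m ^ 2 by nlinarith) this]

lemma one_le_majorant {n : ℕ} (hn : 1 ≤ n) : 1 ≤ majorant n :=
  calc (1 : ℝ) = majorant 1 := by norm_num [majorant]
    _ ≤ majorant n := majorant_monotoneOn Set.self_mem_Ici hn hn

lemma majorant_mul_le {i j : ℕ} (hi : 1 ≤ i) (hj : 1 ≤ j) :
    majorant i * majorant j ≤ majorant (i + j) / 4 * (((i : ℝ) ^ 2)⁻¹ + ((j : ℝ) ^ 2)⁻¹) := by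
  have hi' : (0 : ℝ) < i := by exact_mod_cast hi
  have hj' : (0 : ℝ) < j := by exact_mod_cast hj
  calc majorant i * majorant j = 8 ^ (i + j) / 64 * (((i : ℝ) * j) ^ 2)⁻¹ := by
        unfold majorant; rw [pow_add]; field_simp; ring
    _ ≤ 8 ^ (i + j) / 64 * (2 / ((i : ℝ) + j) ^ 2 * (((i : ℝ) ^ 2)⁻¹ + ((j : ℝ) ^ 2)⁻¹)) := by
        gcongr; exact inv_mul_sq_le hi' hj'
    _ = majorant (i + j) / 4 * (((i : ℝ) ^ 2)⁻¹ + ((j : ℝ) ^ 2)⁻¹) := by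
        unfold majorant; push_cast; field_simp; ring

lemma sum_majorant_mul_le (n : ℕ) :
    ∑ i ∈ Ico 1 (n + 1), majorant i * majorant (n + 1 - i) ≤ majorant (n + 1) := by
  calc ∑ i ∈ Ico 1 (n + 1), majorant i * majorant (n + 1 - i)
      ≤ ∑ i ∈ Ico 1 (n + 1), majorant (n + 1) / 4 *
          (((i : ℝ) ^ 2)⁻¹ + (((n + 1 - i : ℕ) : ℝ) ^ 2)⁻¹) := by
        refine sum_le_sum fun i hi => ?_
        rw [mem_Ico] at hi
        simpa [Nat.add_sub_cancel' hi.2.le] using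
          majorant_mul_le (i := i) (j := n + 1 - i) hi.1 (by omega)
    _ ≤ majorant (n + 1) / 4 * (2 + 2) := by
        rw [← mul_sum, sum_add_distrib]
        gcongr
        · exact div_nonneg (majorant_nonneg _) (by norm_num)
        · exact sum_Ico_one_inv_sq_le n
        · exact sum_Ico_one_inv_sq_reflect_le n
    _ = majorant (n + 1) := by ring

lemma le_majorant_of_le_conv {α : Type*} (f : α → α) (g : ℕ → ℕ) (hg : ∀ n, g n ≤ n)
    (b : α → ℕ → ℝ) (hb_nonneg : ∀ x n, 0 ≤ b x n) (hb_zero : ∀ x, b x 0 ≤ 1)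
    (hb_succ : ∀ x n, b x (n + 1) ≤
      (b (f x) (g n) + ∑ i ∈ Ico 1 (n + 1), b x i * b x (n + 1 - i)) / 2)
    {n : ℕ} (hn : 1 ≤ n) (x : α) : b x n ≤ majorant n := by
  induction n using Nat.strong_induction_on generalizing x with
  | _ n ih =>
  obtain ⟨n, rfl⟩ : ∃ m, n = m + 1 := ⟨n - 1, by omega⟩
  have h_shift : b (f x) (g n) ≤ majorant (n + 1) := by
    rcases Nat.eq_zero_or_pos (g n) with h0 | hpos
    · rw [h0]
      exact (hb_zero (f x)).trans (one_le_majorant (Nat.le_add_left 1 n))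
    · refine (ih (g n) (by linarith [hg n]) hpos (f x)).trans ?_
      exact majorant_monotoneOn hpos (Nat.le_add_left 1 n) (by linarith [hg n])
  have h_conv : ∑ i ∈ Ico 1 (n + 1), b x i * b x (n + 1 - i) ≤ majorant (n + 1) := by
    refine le_trans (sum_le_sum fun i hi => ?_) (sum_majorant_mul_le n)
    rw [mem_Ico] at hi
    exact mul_le_mul (ih i (by omega) hi.1 x) (ih _ (by omega) (by omega) x)
      (hb_nonneg x _) (majorant_nonneg i)
  linarith [hb_succ x n]

namespace IsCoeffFamily

variable {a : BinSeq → ℕ → ℂ}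

lemma norm_zero (ha : IsCoeffFamily a) (s : BinSeq) : ‖a s 0‖ = 1 := by
  simp [ha.1 s]

lemma norm_succ_le (ha : IsCoeffFamily a) (s : BinSeq) (n : ℕ) : ‖a s (n + 1)‖ ≤
    (‖a (shift s) (n / 4)‖ + ∑ i ∈ Ico 1 (n + 1), ‖a s i‖ * ‖a s (n + 1 - i)‖) / 2 := by
  set c := ∑ i ∈ Ico 1 (n + 1), a s i * a s (n + 1 - i)
  have h_conv : ‖c‖ ≤ ∑ i ∈ Ico 1 (n + 1), ‖a s i‖ * ‖a s (n + 1 - i)‖ :=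
    (norm_sum_le _ _).trans_eq (by simp only [norm_mul])
  have h_denom : ‖2 * a s 0‖ = 2 := by simp [ha.norm_zero s]
  rw [ha.2 s n]
  split_ifs
  · rw [div_sub_div_same, norm_div, h_denom]
    gcongr
    exact (norm_sub_le _ _).trans (by rw [norm_neg]; gcongr)
  · rw [norm_div, h_denom, norm_neg]
    gcongr
    exact h_conv.trans (le_add_of_nonneg_left (norm_nonneg _))

lemma norm_le_pow (ha : IsCoeffFamily a) (s : BinSeq) (n : ℕ) : ‖a s n‖ ≤ 8 ^ n := by
  rcases Nat.eq_zero_or_pos n with rfl | hn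
  · simp [ha.norm_zero s]
  · refine le_trans ?_ (majorant_le_pow n)
    exact le_majorant_of_le_conv shift (· / 4) (fun n => Nat.div_le_self n 4)
      (fun s n => ‖a s n‖) (fun _ _ => norm_nonneg _) (fun s => (ha.norm_zero s).le)
      ha.norm_succ_le hn s

end IsCoeffFamily

lemma summable_eight_pow_mul_pow {r : ℝ} (hr0 : 0 ≤ r) (hr : r ≤ 1 / 10) :
    Summable fun n : ℕ => (8 : ℝ) ^ n * r ^ (2 + 4 * n) := by
  have h_ratio : 8 * r ^ 4 < 1 := by nlinarith [pow_le_pow_left₀ hr0 hr 4]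
  have h_eq : (fun n : ℕ => (8 : ℝ) ^ n * r ^ (2 + 4 * n)) = fun n => r ^ 2 * (8 * r ^ 4) ^ n := by
    funext n; rw [pow_add, pow_mul, mul_pow]; ring
  rw [h_eq]
  exact (summable_geometric_of_lt_one (by positivity) h_ratio).mul_left _

/-- For every `s ∈ S` and every real `0 ≤ r < 1/10`, the family `n ↦ |aₙˢ|·r^(2+4n)` is
summable; consequently `φ_s(x,y) = x + Σ_{n≥0} aₙˢ y^(2+4n)` defines a holomorphic
function on `{(x,y) ∈ ℂ² : |y| < 1/10}`. -/
theorem stmt9 (a : BinSeq → ℕ → ℂ) (ha : IsCoeffFamily a) (s : BinSeq) :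
    (∀ r : ℝ, 0 ≤ r → r < 1 / 10 →
      Summable fun n : ℕ => ‖a s n‖ * r ^ (2 + 4 * n)) ∧
    DifferentiableOn ℂ
      (fun p : ℂ × ℂ => p.1 + ∑' n : ℕ, a s n * p.2 ^ (2 + 4 * n))
      {p : ℂ × ℂ | ‖p.2‖ < 1 / 10} := by
  refine ⟨fun r hr0 hr => ?_, ?_⟩
  · refine (summable_eight_pow_mul_pow hr0 hr.le).of_nonneg_of_le (fun n => by positivity) fun n => ?_
    gcongr
    exact ha.norm_le_pow s n
  · have h_series : DifferentiableOn ℂ (fun y : ℂ => ∑' n : ℕ, a s n * y ^ (2 + 4 * n))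
        {y : ℂ | ‖y‖ < 1 / 10} := by
      refine Complex.differentiableOn_tsum_of_summable_norm
        (summable_eight_pow_mul_pow (by norm_num) le_rfl)
        (fun n => (differentiable_id.pow _).const_mul _ |>.differentiableOn)
        (isOpen_lt continuous_norm continuous_const) fun n y hy => ?_
      rw [norm_mul, norm_pow]
      gcongr
      · exact ha.norm_le_pow s n
      · exact hy.le
    exact differentiableOn_fst.add (h_series.comp differentiableOn_snd fun _ hp => hp)
end
end

section
/- For any function ν : ℕ → ℝ there exist binary sequences s, t ∈ S with the following properties: (i) for every n ≥ 0 the local intersection multiplicity μ(n) := dim_ℂ ℂ⟦X,Y⟧/(φ_s, φ_{σ^n(t)}) is finite; (ii) μ(n) > ν(n) for infinitely many n. Since φ_u divides φ_{σ(u)}(X² − Y⁴, Y⁴) in ℂ⟦X,Y⟧ for every u ∈ S (i.e., the polynomial map f(x,y) = (x² − y⁴, y⁴) sends the curve C_u = {φ_u = 0} into C_{σ(u)}), μ(n) is the local intersection multiplicity C_s · f^n(C_t) at the origin. -/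
noncomputable section

/-! Write `φ_s = X + g_s(Y)`. Seen in `ℂ⟦Y⟧⟦X⟧`, `X + g_s` is a distinguished polynomial, so
Weierstrass division identifies `ℂ⟦X,Y⟧/(φ_s)` with `ℂ⟦Y⟧`, sending `φ_u` to `g_u - g_s`. Hence
`ℂ⟦X,Y⟧/(φ_s, φ_u) ≅ ℂ⟦Y⟧/(Y^d)` where `d = 4M + 2` is the order of `g_u - g_s` and `M` is the first
index with `a_M^s ≠ a_M^u`. By the recursion, `a_n^s` only depends on `s_0, …, s_{k-1}` for
`n < N_k = (4^k - 1)/3`, while `a_{N_k}^s` does depend on `s_k`; so if `s` and `u` first differ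
at `k`, the multiplicity is `4 N_k + 2 > k`. Take `s = 0` and `t` the indicator of an infinite set
with gaps long enough that `σ^n(t)` vanishes on `[0, ν n]` for infinitely many `n`. -/

namespace Ideal

variable {R S T : Type*} [CommRing R] [CommRing S] [CommRing T] [Algebra R S] [Algebra R T]

def quotientSpanPairAlgEquiv (p q : S) (e : (S ⧸ span {p}) ≃ₐ[R] T) :
    (S ⧸ span {p, q}) ≃ₐ[R] T ⧸ span {e (Quotient.mk _ q)} :=
  (quotientEquivAlgOfEq R (span_insert p {q})).trans <|
    (DoubleQuot.quotQuotEquivQuotSupₐ R _ _).symm.trans <|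
      quotientEquivAlg _ _ e <| by
        rw [map_span, map_span, Set.image_singleton, Set.image_singleton]; rfl

end Ideal

namespace Polynomial

variable {A : Type*} [CommRing A] {I : Ideal A}

lemma isDistinguishedAt_X_add_C {c : A} (hc : c ∈ I) : (X + C c).IsDistinguishedAt I := by
  refine ⟨⟨fun {n} hn => ?_⟩, monic_X_add_C c⟩
  rw [natDegree_add_C] at hn
  obtain rfl : n = 0 := by have := hn.trans_le natDegree_X_le; omega
  simpa using hc

lemma IsDistinguishedAt.algEquivQuotient_symm_mk_coe [IsAdicComplete I A] {g : A[X]}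
    (H : g.IsDistinguishedAt I) (p : A[X]) :
    H.algEquivQuotient.symm (Ideal.Quotient.mk _ (p : PowerSeries A)) = Ideal.Quotient.mk _ p := by
  rw [AlgEquiv.symm_apply_eq, IsDistinguishedAt.algEquivQuotient_apply, Ideal.quotient_map_mkₐ,
    Ideal.Quotient.mkₐ_eq_mk, coeToPowerSeries.algHom_apply, Algebra.algebraMap_self,
    PowerSeries.map_id, id]

end Polynomial

namespace PowerSeries

variable {A : Type*} [CommRing A] {I : Ideal A} [IsAdicComplete I A]

def quotientSpanXAddCAlgEquiv {c : A} (hc : c ∈ I) : (A⟦X⟧ ⧸ Ideal.span {X + C c}) ≃ₐ[A] A :=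
  (Ideal.quotientEquivAlgOfEq A (by simp)).trans <|
    (Polynomial.isDistinguishedAt_X_add_C hc).algEquivQuotient.symm.trans <|
      (Ideal.quotientEquivAlgOfEq A (by rw [sub_eq_add_neg, ← map_neg, neg_neg])).trans
        (Polynomial.quotientSpanXSubCAlgEquiv (-c))

lemma quotientSpanXAddCAlgEquiv_mk_X_add_C {c : A} (hc : c ∈ I) (h : A) :
    quotientSpanXAddCAlgEquiv hc (Ideal.Quotient.mk _ (X + C h)) = h - c := by
  have hcoe : (X + C h : A⟦X⟧) = ((Polynomial.X + Polynomial.C h : Polynomial A) : A⟦X⟧) := by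
    simp
  rw [quotientSpanXAddCAlgEquiv, AlgEquiv.trans_apply, Ideal.quotientEquivAlgOfEq_mk, hcoe,
    AlgEquiv.trans_apply, Polynomial.IsDistinguishedAt.algEquivQuotient_symm_mk_coe,
    AlgEquiv.trans_apply, Ideal.quotientEquivAlgOfEq_mk, Polynomial.quotientSpanXSubCAlgEquiv_mk,
    Polynomial.eval_add, Polynomial.eval_X, Polynomial.eval_C, neg_add_eq_sub]

def quotientSpanPairXAddCAlgEquiv {c : A} (hc : c ∈ I) (h : A) :
    (A⟦X⟧ ⧸ Ideal.span {X + C c, X + C h}) ≃ₐ[A] A ⧸ Ideal.span {h - c} :=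
  (Ideal.quotientSpanPairAlgEquiv (X + C c) (X + C h) (quotientSpanXAddCAlgEquiv hc)).trans <|
    Ideal.quotientEquivAlgOfEq A
      (congrArg (fun x => Ideal.span {x}) (quotientSpanXAddCAlgEquiv_mk_X_add_C hc h))

end PowerSeries

namespace MvPowerSeries

variable {K : Type*} [Field K]

lemma span_singleton_eq_span_X_pow {f : MvPowerSeries (Fin 1) K} {d : ℕ}
    (hlow : ∀ j < d, coeff (Finsupp.single 0 j) f = 0) (hd : coeff (Finsupp.single 0 d) f ≠ 0) :
    Ideal.span {f} = Ideal.span {X 0 ^ d} := by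
  obtain ⟨v, rfl⟩ : X 0 ^ d ∣ f := X_pow_dvd_iff.mpr fun m hm => by
    rw [Finsupp.unique_single m]
    exact hlow _ hm
  have hv : IsUnit v := by
    rwa [isUnit_iff_constantCoeff, isUnit_iff_ne_zero, ← coeff_zero_eq_constantCoeff_apply,
      ← one_mul (coeff 0 v), ← coeff_add_monomial_mul, add_zero, ← X_pow_eq]
  exact Ideal.span_singleton_mul_right_unit hv _

def coeffsBelow (d : ℕ) : MvPowerSeries (Fin 1) K →ₗ[K] Fin d → K :=
  LinearMap.pi fun j => coeff (Finsupp.single 0 (j : ℕ))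

lemma coeffsBelow_surjective (d : ℕ) : Function.Surjective (coeffsBelow (K := K) d) := by
  intro v
  refine ⟨∑ i : Fin d, monomial (Finsupp.single 0 (i : ℕ)) (v i), funext fun j => ?_⟩
  simp [coeffsBelow, coeff_monomial, Fin.val_inj]

lemma ker_coeffsBelow (d : ℕ) :
    LinearMap.ker (coeffsBelow (K := K) d) = (Ideal.span {X 0 ^ d}).restrictScalars K := by
  ext f
  simp only [LinearMap.mem_ker, Submodule.restrictScalars_mem, Ideal.mem_span_singleton,
    X_pow_dvd_iff, funext_iff, coeffsBelow, LinearMap.pi_apply, Pi.zero_apply]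
  refine ⟨fun h m hm => ?_, fun h j => h _ (by simp)⟩
  rw [Finsupp.unique_single m]
  exact h ⟨m 0, hm⟩

def quotientSpanXPowLinearEquiv (d : ℕ) :
    (MvPowerSeries (Fin 1) K ⧸ Ideal.span {(X 0 : MvPowerSeries (Fin 1) K) ^ d}) ≃ₗ[K]
      Fin d → K :=
  (Submodule.Quotient.restrictScalarsEquiv K _).symm.trans <|
    (Submodule.quotEquivOfEq _ _ (ker_coeffsBelow d).symm).trans <|
      (coeffsBelow d).quotKerEquivOfSurjective (coeffsBelow_surjective d)

lemma mem_span_range_X_of_constantCoeff_eq_zero {g : MvPowerSeries (Fin 1) K}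
    (hg : constantCoeff g = 0) : g ∈ Ideal.span (Set.range X) := by
  obtain ⟨q, rfl⟩ : X 0 ∣ g := X_dvd_iff.mpr fun m hm => by
    rwa [Finsupp.unique_single m, show m default = 0 from hm, Finsupp.single_zero,
      coeff_zero_eq_constantCoeff_apply]
  exact Ideal.mul_mem_right _ _ (Ideal.subset_span ⟨0, rfl⟩)

def quotientSpanPairXAddAlgEquiv {g : MvPowerSeries (Fin 1) K} (hg : constantCoeff g = 0)
    (h : MvPowerSeries (Fin 1) K) :
    (MvPowerSeries (Fin 2) K ⧸ Ideal.span {X 0 + (finSuccEquiv K 1).symm (PowerSeries.C g),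
      X 0 + (finSuccEquiv K 1).symm (PowerSeries.C h)}) ≃ₐ[K]
      MvPowerSeries (Fin 1) K ⧸ Ideal.span {h - g} :=
  (Ideal.quotientEquivAlg _ _ (finSuccEquiv K 1) (by simp [Ideal.map_span, Set.image_pair])).trans
    ((PowerSeries.quotientSpanPairXAddCAlgEquiv
      (mem_span_range_X_of_constantCoeff_eq_zero hg) h).restrictScalars K)

def quotientSpanPairXAddLinearEquiv {g h : MvPowerSeries (Fin 1) K} (hg : constantCoeff g = 0)
    {d : ℕ} (hlow : ∀ j < d, coeff (Finsupp.single 0 j) g = coeff (Finsupp.single 0 j) h)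
    (hd : coeff (Finsupp.single 0 d) g ≠ coeff (Finsupp.single 0 d) h) :
    (MvPowerSeries (Fin 2) K ⧸ Ideal.span {X 0 + (finSuccEquiv K 1).symm (PowerSeries.C g),
      X 0 + (finSuccEquiv K 1).symm (PowerSeries.C h)}) ≃ₗ[K] Fin d → K :=
  (quotientSpanPairXAddAlgEquiv hg h).toLinearEquiv.trans <|
    (Ideal.quotientEquivAlgOfEq K (span_singleton_eq_span_X_pow
      (fun j hj => by rw [map_sub, hlow j hj, sub_self])
      (by rw [map_sub]; exact sub_ne_zero.mpr hd.symm))).toLinearEquiv.trans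
      (quotientSpanXPowLinearEquiv d)

end MvPowerSeries

def coeffSeries (a : BinSeq → ℕ → ℂ) (s : BinSeq) : MvPowerSeries (Fin 1) ℂ :=
  fun m => if m 0 % 4 = 2 then a s ((m 0 - 2) / 4) else 0

section coeffSeries

open MvPowerSeries

variable (a : BinSeq → ℕ → ℂ) (s : BinSeq)

lemma coeff_single_coeffSeries (j : ℕ) :
    coeff (Finsupp.single 0 j) (coeffSeries a s) = if j % 4 = 2 then a s ((j - 2) / 4) else 0 := by
  rw [coeff_apply]; simp [coeffSeries]

lemma constantCoeff_coeffSeries : constantCoeff (coeffSeries a s) = 0 := by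
  rw [← coeff_zero_eq_constantCoeff_apply, ← Finsupp.single_zero 0, coeff_single_coeffSeries]
  simp

lemma tailSer_eq_coeffSeries :
    tailSer a s = (finSuccEquiv ℂ 1).symm (PowerSeries.C (coeffSeries a s)) := by
  rw [AlgEquiv.eq_symm_apply]
  ext k x
  have hx : (Finsupp.cons k x) 1 = x 0 := Finsupp.cons_succ 0 k x
  rw [coeff_coeff_finSuccEquiv, PowerSeries.coeff_C, coeff_apply, tailSer, Finsupp.cons_zero, hx]
  by_cases hk : k = 0
  · rw [if_pos hk, coeff_apply, coeffSeries]; simp [hk]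
  · rw [if_neg hk, if_neg fun h => hk h.1, LinearMap.map_zero]

end coeffSeries

theorem finrank_quotient_span_phi_of_coeffs {a : BinSeq → ℕ → ℂ} {s u : BinSeq} {M : ℕ}
    (hlow : ∀ m < M, a s m = a u m) (hM : a s M ≠ a u M) :
    FiniteDimensional ℂ (MvPowerSeries (Fin 2) ℂ ⧸ Ideal.span {phi a s, phi a u}) ∧
      Module.finrank ℂ (MvPowerSeries (Fin 2) ℂ ⧸ Ideal.span {phi a s, phi a u}) = 4 * M + 2 := by
  have hlow' : ∀ j < 4 * M + 2, MvPowerSeries.coeff (Finsupp.single 0 j) (coeffSeries a s) =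
      MvPowerSeries.coeff (Finsupp.single 0 j) (coeffSeries a u) := fun j hj => by
    simp only [coeff_single_coeffSeries]
    split_ifs
    · exact hlow _ (by omega)
    · rfl
  have hM' : MvPowerSeries.coeff (Finsupp.single 0 (4 * M + 2)) (coeffSeries a s) ≠
      MvPowerSeries.coeff (Finsupp.single 0 (4 * M + 2)) (coeffSeries a u) := by
    simp only [coeff_single_coeffSeries]
    rwa [if_pos (by omega), if_pos (by omega), show (4 * M + 2 - 2) / 4 = M by omega]
  let e := MvPowerSeries.quotientSpanPairXAddLinearEquiv (constantCoeff_coeffSeries a s) hlow' hM'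
  rw [phi, phi, tailSer_eq_coeffSeries, tailSer_eq_coeffSeries]
  exact ⟨e.symm.finiteDimensional, by rw [e.finrank_eq, Module.finrank_fin_fun]⟩

def dependIndex : ℕ → ℕ
  | 0 => 0
  | k + 1 => 4 * dependIndex k + 1

lemma dependIndex_succ (k : ℕ) : dependIndex (k + 1) = 4 * dependIndex k + 1 := rfl

lemma le_dependIndex (k : ℕ) : k ≤ dependIndex k := by
  induction k with
  | zero => rfl
  | succ k ih => rw [dependIndex_succ]; omega

namespace IsCoeffFamily

variable {a : BinSeq → ℕ → ℂ}

lemma apply_zero_ne_zero (ha : IsCoeffFamily a) (s : BinSeq) : a s 0 ≠ 0 := by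
  rw [ha.1]; exact pow_ne_zero _ (by norm_num)

lemma two_mul_apply_succ (ha : IsCoeffFamily a) (s : BinSeq) (n : ℕ) :
    2 * a s 0 * a s (n + 1) =
      -((if 4 ∣ n then a (shift s) (n / 4) else 0) +
        ∑ i ∈ Finset.Ico 1 (n + 1), a s i * a s (n + 1 - i)) := by
  have h0 := ha.apply_zero_ne_zero s
  rw [ha.2]
  split_ifs <;> field_simp <;> ring

lemma apply_succ_sub_apply_succ (ha : IsCoeffFamily a) {s u : BinSeq} {n : ℕ}
    (h : ∀ i ≤ n, a s i = a u i) :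
    2 * a s 0 * (a s (n + 1) - a u (n + 1)) =
      if 4 ∣ n then a (shift u) (n / 4) - a (shift s) (n / 4) else 0 := by
  have hsum : ∑ i ∈ Finset.Ico 1 (n + 1), a s i * a s (n + 1 - i) =
      ∑ i ∈ Finset.Ico 1 (n + 1), a u i * a u (n + 1 - i) :=
    Finset.sum_congr rfl fun i hi => by
      have := Finset.mem_Ico.mp hi
      rw [h i (by omega), h (n + 1 - i) (by omega)]
  rw [mul_sub, ha.two_mul_apply_succ, h 0 (Nat.zero_le n), ha.two_mul_apply_succ, hsum]
  split_ifs <;> ring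

lemma apply_eq_of_forall_lt_eq (ha : IsCoeffFamily a) {k : ℕ} :
    ∀ {s u : BinSeq}, (∀ i < k, s i = u i) → ∀ n < dependIndex k, a s n = a u n := by
  induction k with
  | zero => intro s u _ n hn; exact absurd hn (Nat.not_lt_zero n)
  | succ k ih =>
    intro s u h n
    induction n using Nat.strong_induction_on with
    | _ n ihn =>
    intro hn
    rw [dependIndex_succ] at hn
    rcases n with _ | n
    · rw [ha.1, ha.1, h 0 k.succ_pos]
    · have hdiff := ha.apply_succ_sub_apply_succ (n := n) fun i hi =>
        ihn i (by omega) (by rw [dependIndex_succ]; omega)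
      have hshift : 4 ∣ n → a (shift s) (n / 4) = a (shift u) (n / 4) := fun _ =>
        ih (fun i hi => h (i + 1) (by omega)) _ (by omega)
      have h2 : 2 * a s 0 ≠ 0 := mul_ne_zero two_ne_zero (ha.apply_zero_ne_zero s)
      split_ifs at hdiff with h4
      · rw [hshift h4, sub_self, mul_eq_zero, sub_eq_zero] at hdiff
        exact hdiff.resolve_left h2
      · rw [mul_eq_zero, sub_eq_zero] at hdiff
        exact hdiff.resolve_left h2

lemma apply_dependIndex_ne (ha : IsCoeffFamily a) {k : ℕ} :
    ∀ {s u : BinSeq}, (∀ i < k, s i = u i) → s k ≠ u k →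
      a s (dependIndex k) ≠ a u (dependIndex k) := by
  induction k with
  | zero =>
    intro s u _ hk
    show a s 0 ≠ a u 0
    rw [ha.1, ha.1]
    revert hk
    generalize s 0 = x
    generalize u 0 = y
    fin_cases x <;> fin_cases y <;> norm_num
  | succ k ih =>
    intro s u h hk
    have hdiff := ha.apply_succ_sub_apply_succ (n := 4 * dependIndex k) fun i hi =>
      ha.apply_eq_of_forall_lt_eq h i (by rw [dependIndex_succ]; omega)
    rw [if_pos (dvd_mul_right 4 _), Nat.mul_div_cancel_left _ (by norm_num)] at hdiff
    have hshift := ih (s := shift s) (u := shift u) (fun i hi => h (i + 1) (by omega)) hk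
    rw [dependIndex_succ]
    intro heq
    rw [heq, sub_self, mul_zero, eq_comm, sub_eq_zero] at hdiff
    exact hshift hdiff.symm

theorem finrank_quotient_span_phi (ha : IsCoeffFamily a) {s u : BinSeq} {k : ℕ}
    (hlow : ∀ i < k, s i = u i) (hk : s k ≠ u k) :
    FiniteDimensional ℂ (MvPowerSeries (Fin 2) ℂ ⧸ Ideal.span {phi a s, phi a u}) ∧
      Module.finrank ℂ (MvPowerSeries (Fin 2) ℂ ⧸ Ideal.span {phi a s, phi a u}) =
        4 * dependIndex k + 2 :=
  finrank_quotient_span_phi_of_coeffs (ha.apply_eq_of_forall_lt_eq hlow)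
    (ha.apply_dependIndex_ne hlow hk)

end IsCoeffFamily

lemma shift_iterate_apply (t : BinSeq) (n i : ℕ) : shift^[n] t i = t (n + i) := by
  induction n generalizing t with
  | zero => simp
  | succ n ih => rw [Function.iterate_succ_apply, ih, shift, Nat.add_right_comm, Nat.add_assoc]

def gapSeq (ν : ℕ → ℝ) : ℕ → ℕ
  | 0 => 0
  | j + 1 => gapSeq ν j + ⌈ν (gapSeq ν j + 1)⌉₊ + 2

lemma strictMono_gapSeq (ν : ℕ → ℝ) : StrictMono (gapSeq ν) :=
  strictMono_nat_of_lt_succ fun j => by simp only [gapSeq]; omega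

lemma exists_infinite_set_with_long_gaps (ν : ℕ → ℝ) :
    ∃ P : Set ℕ, P.Infinite ∧ {n | ∀ i : ℕ, (i : ℝ) ≤ ν n → n + i ∉ P}.Infinite := by
  have hmono := strictMono_gapSeq ν
  refine ⟨Set.range (gapSeq ν), Set.infinite_range_of_injective hmono.injective,
    Set.infinite_of_injective_forall_mem (f := fun j => gapSeq ν j + 1)
      (fun i j hij => hmono.injective (by simpa using hij)) fun j i hi => ?_⟩
  rintro ⟨l, hl⟩
  have hceil : i ≤ ⌈ν (gapSeq ν j + 1)⌉₊ := Nat.cast_le.mp (hi.trans (Nat.le_ceil _))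
  rcases le_or_gt l j with hlj | hjl
  · have := hmono.monotone hlj; omega
  · have := hmono.monotone (Nat.succ_le_of_lt hjl)
    simp only [gapSeq] at this
    omega

/-- For any `ν : ℕ → ℝ` there exist binary sequences `s, t ∈ S` such that
(i) for every `n ≥ 0` the local intersection multiplicity
`μ(n) = dim_ℂ ℂ⟦X,Y⟧/(φ_s, φ_{σⁿ(t)})` is finite, and
(ii) `μ(n) > ν(n)` for infinitely many `n`.
(Since `φ_u ∣ φ_{σ(u)}(X² − Y⁴, Y⁴)`, i.e. `f(x,y) = (x² − y⁴, y⁴)` maps `C_u` into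
`C_{σ(u)}`, the number `μ(n)` is the local intersection multiplicity `C_s · fⁿ(C_t)`.) -/
theorem stmt10 (a : BinSeq → ℕ → ℂ) (ha : IsCoeffFamily a) (ν : ℕ → ℝ) :
    ∃ s t : BinSeq,
      (∀ n : ℕ,
        FiniteDimensional ℂ
          (MvPowerSeries (Fin 2) ℂ ⧸ Ideal.span {phi a s, phi a (shift^[n] t)})) ∧
      {n : ℕ |
        ν n < (Module.finrank ℂ
          (MvPowerSeries (Fin 2) ℂ ⧸ Ideal.span {phi a s, phi a (shift^[n] t)}) : ℝ)}.Infinite := by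
  classical
  obtain ⟨P, hP, hgaps⟩ := exists_infinite_set_with_long_gaps ν
  have hnext (n : ℕ) : ∃ k, n + k ∈ P := by
    obtain ⟨m, hm, hnm⟩ := hP.exists_gt n
    exact ⟨m - n, by rwa [Nat.add_sub_cancel' hnm.le]⟩
  have hmult (n : ℕ) := ha.finrank_quotient_span_phi (s := 0) (u := shift^[n] (P.indicator 1))
    (k := Nat.find (hnext n))
    (fun i hi => by simp [shift_iterate_apply, Nat.find_min (hnext n) hi])
    (by simp [shift_iterate_apply, Nat.find_spec (hnext n)])
  refine ⟨0, P.indicator 1, fun n => (hmult n).1, hgaps.mono fun n hn => ?_⟩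
  show ν n < _
  rw [(hmult n).2]
  calc ν n < Nat.find (hnext n) := not_le.mp fun h => hn _ h (Nat.find_spec (hnext n))
    _ ≤ (4 * dependIndex (Nat.find (hnext n)) + 2 : ℕ) := by
      exact_mod_cast (le_dependIndex _).trans (by omega)
end
end

section
/- Let s, t ∈ S be distinct binary sequences, and let ord(g_s − g_t) denote the order of vanishing of the power series g_s − g_t ∈ ℂ⟦Y⟧. Then: if s_0 ≠ t_0 one has ord(g_s − g_t) = 2, while if s_0 = t_0 (so that σ(s) ≠ σ(t)) one has ord(g_s − g_t) = 4·ord(g_{σ(s)} − g_{σ(t)}) − 2. -/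
noncomputable section

/-- The one-variable series `g_s = Σ_{n≥0} aₙˢ Y^(2+4n) ∈ ℂ⟦Y⟧`. -/
def gSer (a : BinSeq → ℕ → ℂ) (s : BinSeq) : PowerSeries ℂ :=
  PowerSeries.mk fun k => if k % 4 = 2 then a s ((k - 2) / 4) else 0

/-!
The coefficient `aₙˢ` is determined by `a₀ˢ = ±1`, the earlier `aᵢˢ`, and, for `n = 4m + 1`,
by `a_m^{σ(s)}`, which enters linearly with the nonzero factor `-1/(2a₀ˢ)`. So if `s₀ = t₀` and
`a^{σ(s)}`, `a^{σ(t)}` first differ at index `k`, then `aˢ`, `aᵗ` first differ at `4k + 1`. As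
`g_s` carries `aₙˢ` at `Y^(4n+2)`, the two orders are `4k + 2` and `16k + 6 = 4(4k + 2) - 2`.
The same observation shows by induction on the first differing digit that `s ↦ aˢ` is
injective, which makes `k` exist.
-/

theorem Nat.exists_eq_of_lt_and_ne {α : Type*} {f g : ℕ → α} (h : f ≠ g) :
    ∃ k, (∀ j < k, f j = g j) ∧ f k ≠ g k := by
  classical
  have hex := Function.ne_iff.1 h
  exact ⟨Nat.find hex, fun j hj => not_not.1 (Nat.find_min hex hj), Nat.find_spec hex⟩

theorem Finset.sum_Ico_mul_congr {R : Type*} [AddCommMonoid R] [Mul R] {f g : ℕ → R} {m : ℕ}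
    (h : ∀ i ≤ m, f i = g i) :
    ∑ i ∈ Finset.Ico 1 (m + 1), f i * f (m + 1 - i) =
      ∑ i ∈ Finset.Ico 1 (m + 1), g i * g (m + 1 - i) := by
  refine Finset.sum_congr rfl fun i hi => ?_
  rw [Finset.mem_Ico] at hi
  rw [h i (by omega), h (m + 1 - i) (by omega)]

theorem shift_ne_of_ne {s t : BinSeq} (hst : s ≠ t) (h0 : s 0 = t 0) : shift s ≠ shift t := by
  intro h
  refine hst (funext fun n => ?_)
  cases n with
  | zero => exact h0
  | succ n => exact congrFun h n

section gSer

variable (a : BinSeq → ℕ → ℂ)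

theorem coeff_gSer (s : BinSeq) (k : ℕ) :
    PowerSeries.coeff k (gSer a s) = if k % 4 = 2 then a s ((k - 2) / 4) else 0 := by
  simp [gSer]

variable {a}

theorem order_gSer_sub {s t : BinSeq} {k : ℕ} (hlt : ∀ j < k, a s j = a t j)
    (hk : a s k ≠ a t k) : (gSer a s - gSer a t).order = (4 * k + 2 : ℕ) := by
  rw [PowerSeries.order_eq_nat]
  simp only [map_sub, coeff_gSer]
  refine ⟨?_, fun i hi => ?_⟩
  · rw [if_pos (by omega), if_pos (by omega), show (4 * k + 2 - 2) / 4 = k by omega]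
    exact sub_ne_zero.2 hk
  · split_ifs with h
    · rw [hlt _ (by omega), sub_self]
    · exact sub_self 0

end gSer

namespace IsCoeffFamily

variable {a : BinSeq → ℕ → ℂ} (ha : IsCoeffFamily a)
include ha

theorem coeff_zero_ne_zero (s : BinSeq) : a s 0 ≠ 0 := by
  rw [ha.1]
  exact pow_ne_zero _ (by norm_num)

theorem coeff_zero_eq_iff {s t : BinSeq} : a s 0 = a t 0 ↔ s 0 = t 0 := by
  rw [ha.1, ha.1]
  generalize s 0 = x, t 0 = y
  fin_cases x <;> fin_cases y <;> norm_num

/-- Below `4k + 1` the recursion for `aˢ` only reads `a^{σ(s)}` below `k`. -/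
theorem eq_of_shift_eq {s t : BinSeq} (h0 : a s 0 = a t 0) {k : ℕ}
    (hlt : ∀ j < k, a (shift s) j = a (shift t) j) : ∀ n < 4 * k + 1, a s n = a t n := by
  intro n
  induction n using Nat.strong_induction_on with
  | _ n ih =>
    intro hn
    cases n with
    | zero => exact h0
    | succ m =>
      rw [ha.2 s m, ha.2 t m, h0, Finset.sum_Ico_mul_congr fun i hi => ih i (by omega) (by omega)]
      split_ifs with h4
      · rw [hlt (m / 4) (by omega)]
      · rfl

theorem sub_coeff_four_mul_add_one {s t : BinSeq} (h0 : a s 0 = a t 0) {k : ℕ}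
    (hlt : ∀ j < k, a (shift s) j = a (shift t) j) :
    a s (4 * k + 1) - a t (4 * k + 1) = -(a (shift s) k - a (shift t) k) / (2 * a s 0) := by
  rw [ha.2 s (4 * k), ha.2 t (4 * k), if_pos ⟨k, rfl⟩, if_pos ⟨k, rfl⟩, h0,
    Finset.sum_Ico_mul_congr fun i hi => (eq_of_shift_eq ha) h0 hlt i (by omega),
    Nat.mul_div_cancel_left k (by norm_num)]
  ring

theorem coeff_ne_of_shift_ne {s t : BinSeq} (h0 : a s 0 = a t 0) {k : ℕ}
    (hlt : ∀ j < k, a (shift s) j = a (shift t) j) (hk : a (shift s) k ≠ a (shift t) k) :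
    a s (4 * k + 1) ≠ a t (4 * k + 1) := by
  rw [← sub_ne_zero, (sub_coeff_four_mul_add_one ha) h0 hlt]
  exact div_ne_zero (neg_ne_zero.2 (sub_ne_zero.2 hk))
    (mul_ne_zero two_ne_zero ((coeff_zero_ne_zero ha) s))

theorem injective : Function.Injective a := by
  intro s t hst
  funext N
  induction N generalizing s t with
  | zero => exact (coeff_zero_eq_iff ha).1 (congrFun hst 0)
  | succ N ih =>
    suffices hσ : a (shift s) = a (shift t) from ih hσ
    by_contra hne
    obtain ⟨k, hlt, hk⟩ := Nat.exists_eq_of_lt_and_ne hne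
    exact (coeff_ne_of_shift_ne ha) (congrFun hst 0) hlt hk (congrFun hst _)

end IsCoeffFamily

/-- For distinct `s, t ∈ S`: if `s₀ ≠ t₀` then `ord(g_s − g_t) = 2`, while if `s₀ = t₀`
(so that `σ(s) ≠ σ(t)`) then `ord(g_s − g_t) = 4·ord(g_{σ(s)} − g_{σ(t)}) − 2`. -/
theorem stmt11 (a : BinSeq → ℕ → ℂ) (ha : IsCoeffFamily a) (s t : BinSeq) (hst : s ≠ t) :
    (s 0 ≠ t 0 → (gSer a s - gSer a t).order = 2) ∧
    (s 0 = t 0 →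
      (gSer a s - gSer a t).order =
        4 * (gSer a (shift s) - gSer a (shift t)).order - 2) := by
  refine ⟨fun h0 => ?_, fun h0 => ?_⟩
  · exact order_gSer_sub (k := 0) (by simp) (mt (IsCoeffFamily.coeff_zero_eq_iff ha).1 h0)
  · obtain ⟨k, hlt, hk⟩ := Nat.exists_eq_of_lt_and_ne ((IsCoeffFamily.injective ha).ne (shift_ne_of_ne hst h0))
    have ha0 := (IsCoeffFamily.coeff_zero_eq_iff ha).2 h0
    rw [order_gSer_sub ((IsCoeffFamily.eq_of_shift_eq ha) ha0 hlt) ((IsCoeffFamily.coeff_ne_of_shift_ne ha) ha0 hlt hk),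
      order_gSer_sub hlt hk, show 4 * (4 * k + 1) + 2 = 4 * (4 * k + 2) - 2 by omega]
    push_cast
    ring_nf
end
end
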